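/- Let n ≥ 1, C, κ, τ, γ > 0 with γ ≥ 4κτ(Cn+1)/n. Let α̂, α* ∈ ℝ with |α̂| ≤ Cκ and |α*| ≤ Cκ, and let L̂, L*, Ŝ, S* ∈ ℝ^{n×n} with ‖L̂‖_∞ ≤ κ/n, ‖L*‖_∞ ≤ κ/n, and (L̂ − L*)𝟙 = 0. Write Δ^α = α̂−α*, Δ^L = L̂−L*, Δ^S = Ŝ−S*. Then (τ/2)·‖Δ^α𝟙𝟙ᵀ + Δ^L + Δ^S‖_F² ≥ (τ/2)·‖Δ^α𝟙𝟙ᵀ‖_F² + (τ/2)·‖Δ^L‖_F² + (τ/2)·‖Δ^S‖_F² − (γ/2)·‖Δ^S‖_1. -/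

import Mathlib

open Matrix BigOperators Finset

noncomputable section

namespace CitNet

variable {n : ℕ}

/-- Frobenius norm of a real matrix. -/
def frob (A : Matrix (Fin n) (Fin n) ℝ) : ℝ :=
  Real.sqrt (∑ i, ∑ j, (A i j) ^ 2)

/-- Elementwise ℓ1 norm. -/
def l1 (A : Matrix (Fin n) (Fin n) ℝ) : ℝ :=
  ∑ i, ∑ j, |A i j|

/-- Elementwise sup norm. -/
def supNorm (A : Matrix (Fin n) (Fin n) ℝ) : ℝ :=
  ⨆ i, ⨆ j, |A i j|

/-- Trace inner product. -/
def tinner (A B : Matrix (Fin n) (Fin n) ℝ) : ℝ :=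
  Matrix.trace (Aᵀ * B)

/-- Nuclear norm: trace of the PSD square root of AᴴA. -/
def nuclearNorm (A : Matrix (Fin n) (Fin n) ℝ) : ℝ :=
  ((Matrix.isHermitian_conjTranspose_mul_self A).eigenvectorUnitary.1 *
    Matrix.diagonal (Real.sqrt ∘ (Matrix.isHermitian_conjTranspose_mul_self A).eigenvalues) *
    (star (Matrix.isHermitian_conjTranspose_mul_self A).eigenvectorUnitary :
      Matrix (Fin n) (Fin n) ℝ)).trace

/-- Singular values in decreasing order: `svDesc A j` is σ_{j+1}(A). -/
def svDesc (A : Matrix (Fin n) (Fin n) ℝ) : Fin n → ℝ := fun j =>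
  Real.sqrt ((Matrix.isHermitian_conjTranspose_mul_self A).eigenvalues
    (Tuple.sort (Matrix.isHermitian_conjTranspose_mul_self A).eigenvalues j.rev))

/-- Operator norm: largest singular value. -/
def opNorm (A : Matrix (Fin n) (Fin n) ℝ) : ℝ :=
  ⨆ j, svDesc A j

/-- The all-ones matrix 𝟙𝟙ᵀ. -/
def onesMat : Matrix (Fin n) (Fin n) ℝ :=
  Matrix.of fun _ _ => (1 : ℝ)

/-- The centering matrix J = I − (1/n)𝟙𝟙ᵀ. -/
def Jmat (n : ℕ) : Matrix (Fin n) (Fin n) ℝ :=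
  1 - (n : ℝ)⁻¹ • onesMat

/-- Restriction of a matrix to an index set. -/
def restrict (A : Matrix (Fin n) (Fin n) ℝ) (Ω : Finset (Fin n × Fin n)) :
    Matrix (Fin n) (Fin n) ℝ :=
  Matrix.of fun i j => if (i, j) ∈ Ω then A i j else 0

/-- The logistic (sigmoid) matrix P(Θ). -/
def logis (Θ : Matrix (Fin n) (Fin n) ℝ) : Matrix (Fin n) (Fin n) ℝ :=
  Matrix.of fun i j => Real.exp (Θ i j) / (1 + Real.exp (Θ i j))

/-- Negative log-likelihood function h. -/
def hfun (X Θ : Matrix (Fin n) (Fin n) ℝ) : ℝ :=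
  -(1 / (n : ℝ)) * ∑ i, ∑ j, (X i j * Θ i j - Real.log (1 + Real.exp (Θ i j)))

/-- lower bound on `(τ/2)‖Δ^α𝟙𝟙ᵀ + Δ^L + Δ^S‖_F²`. -/
theorem stmt9 (n : ℕ) (hn : 1 ≤ n) (C κ τ γ : ℝ)
    (hC : 0 < C) (hκ : 0 < κ) (hτ : 0 < τ) (hγ : 0 < γ)
    (hγge : γ ≥ 4 * κ * τ * (C * n + 1) / n)
    (αh αs : ℝ) (hαh : |αh| ≤ C * κ) (hαs : |αs| ≤ C * κ)
    (Lh Ls Sh Ss : Matrix (Fin n) (Fin n) ℝ)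
    (hLh : supNorm Lh ≤ κ / n) (hLs : supNorm Ls ≤ κ / n)
    (hcen : (Lh - Ls) *ᵥ (fun _ => (1 : ℝ)) = 0) :
    (τ / 2) * (frob ((αh - αs) • (onesMat : Matrix (Fin n) (Fin n) ℝ)
        + (Lh - Ls) + (Sh - Ss))) ^ 2 ≥
      (τ / 2) * (frob ((αh - αs) • (onesMat : Matrix (Fin n) (Fin n) ℝ))) ^ 2
        + (τ / 2) * (frob (Lh - Ls)) ^ 2
        + (τ / 2) * (frob (Sh - Ss)) ^ 2
        - (γ / 2) * l1 (Sh - Ss) := by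
  have hn0 : (0:ℝ) < n := by exact_mod_cast hn
  set a := αh - αs with ha
  set L := Lh - Ls with hL
  set S := Sh - Ss with hS
  have hfrob : ∀ X : Matrix (Fin n) (Fin n) ℝ, (frob X)^2 = ∑ i, ∑ j, (X i j)^2 := by
    intro X
    exact Real.sq_sqrt (by positivity)
  rw [hfrob, hfrob, hfrob, hfrob, l1]
  -- row sums of L vanish
  have hrow : ∀ i, ∑ j, L i j = 0 := by
    intro i
    have := congrFun hcen i
    simpa [Matrix.mulVec, dotProduct] using this
  -- entrywise bound on L
  have hsup : ∀ (A : Matrix (Fin n) (Fin n) ℝ) i j, |A i j| ≤ supNorm A := by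
    intro A i j
    have h1 : |A i j| ≤ ⨆ j, |A i j| := le_ciSup (f := fun j => |A i j|) (Set.Finite.bddAbove (Set.finite_range _)) j
    have h2 : (⨆ j, |A i j|) ≤ ⨆ i, ⨆ j, |A i j| :=
      le_ciSup (f := fun i => ⨆ j, |A i j|) (Set.Finite.bddAbove (Set.finite_range _)) i
    exact h1.trans h2
  have hLb : ∀ i j, |L i j| ≤ 2 * (κ / n) := by
    intro i j
    have : |L i j| ≤ |Lh i j| + |Ls i j| := by
      simpa [hL, Matrix.sub_apply] using abs_sub (Lh i j) (Ls i j)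
    calc |L i j| ≤ |Lh i j| + |Ls i j| := this
      _ ≤ κ / n + κ / n := add_le_add ((hsup Lh i j).trans hLh) ((hsup Ls i j).trans hLs)
      _ = 2 * (κ / n) := by ring
  have hab : |a| ≤ 2 * (C * κ) := by
    calc |a| ≤ |αh| + |αs| := abs_sub αh αs
      _ ≤ C * κ + C * κ := add_le_add hαh hαs
      _ = 2 * (C * κ) := by ring
  -- key coefficient bound : τ * |a + L i j| ≤ γ / 2
  have hcoef : ∀ i j, τ * |a + L i j| ≤ γ / 2 := by
    intro i j
    have h1 : |a + L i j| ≤ 2 * (C * κ) + 2 * (κ / n) :=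
      (abs_add_le a (L i j)).trans (add_le_add hab (hLb i j))
    have h2 : τ * |a + L i j| ≤ τ * (2 * (C * κ) + 2 * (κ / n)) :=
      mul_le_mul_of_nonneg_left h1 hτ.le
    have h3 : τ * (2 * (C * κ) + 2 * (κ / n)) = (4 * κ * τ * (C * n + 1) / n) / 2 := by
      field_simp
      ring
    have h4 : (4 * κ * τ * (C * n + 1) / n) / 2 ≤ γ / 2 := by linarith
    linarith
  -- expand the left-hand side
  have hexp : ∑ i, ∑ j, ((a • (onesMat : Matrix (Fin n) (Fin n) ℝ) + L + S) i j)^2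
      = (∑ i, ∑ j, ((a • (onesMat : Matrix (Fin n) (Fin n) ℝ)) i j)^2)
        + (∑ i, ∑ j, (L i j)^2) + (∑ i, ∑ j, (S i j)^2)
        + (∑ i, (2 * a * ∑ j, L i j))
        + (∑ i, ∑ j, 2 * (a + L i j) * S i j) := by
    simp only [← Finset.sum_add_distrib, Finset.mul_sum]
    refine Finset.sum_congr rfl fun i _ => ?_
    refine Finset.sum_congr rfl fun j _ => ?_
    simp [Matrix.add_apply, Matrix.smul_apply, onesMat, smul_eq_mul]
    ring
  have hcross : ∑ i, ∑ j, 2 * (a + L i j) * S i j ≥ ∑ i, ∑ j, -((γ/τ) * |S i j|) := by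
    refine Finset.sum_le_sum fun i _ => Finset.sum_le_sum fun j _ => ?_
    have h2 : 2 * |a + L i j| ≤ γ / τ := by
      rw [le_div_iff₀ hτ]
      have := hcoef i j
      linarith
    have h1 : |2 * (a + L i j) * S i j| ≤ (γ/τ) * |S i j| := by
      rw [abs_mul, abs_mul, abs_two]
      exact mul_le_mul_of_nonneg_right h2 (abs_nonneg _)
    exact le_trans (neg_le_neg h1) (neg_abs_le _)
  have hsum0 : ∑ i, (2 * a * ∑ j, L i j) = 0 := by
    simp [hrow]
  rw [hexp, hsum0]
  have habs : ∑ i, ∑ j, -((γ/τ) * |S i j|) = -(γ/τ) * ∑ i, ∑ j, |S i j| := by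
    simp [Finset.mul_sum, Finset.sum_neg_distrib, neg_mul]
  rw [habs] at hcross
  have hτ2 : (0:ℝ) < τ / 2 := by linarith
  have := mul_le_mul_of_nonneg_left hcross hτ2.le
  have hγτ : (τ/2) * (-(γ/τ) * ∑ i, ∑ j, |S i j|) = -((γ/2) * ∑ i, ∑ j, |S i j|) := by
    field_simp
  rw [hγτ] at this
  nlinarith [this]

end CitNet
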